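/- Let y(s) = s²(s+2)/(s²+s+1) and t(s) = s³(s+2)/(2s+1). Then on any open set of real s where the denominators and dt/ds are nonzero, the function Y defined locally by Y(t(s)) = y(s) satisfies the sixth Painlevé equation with parameters α = 1/8, β = −1/8, γ = 1/8, δ = 3/8. -/

import Mathlib

/-!
With u = s(s+1) one has y'(s) = u(u+4)/(u+1)² and t'(s) = 6u²/(4u+1), so near every admissible
point the slope Y₁ = y'/t' is the rational function (4u+1)(u+4)/(6u(u+1)²). Hence Y₂ is an
explicit rational function of s, and the Painlevé VI equation becomes a rational identity in s,
checked after factoring y − 1, t − 1 and y − t.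
-/

open Filter Topology

noncomputable section

def painleveVIRhs (α β γ δ t y y' : ℝ) : ℝ :=
  (1 / 2) * (1 / y + 1 / (y - 1) + 1 / (y - t)) * y' ^ 2
    - (1 / t + 1 / (t - 1) + 1 / (y - t)) * y'
    + y * (y - 1) * (y - t) / (t ^ 2 * (t - 1) ^ 2) *
      (α + β * t / y ^ 2 + γ * (t - 1) / (y - 1) ^ 2 + δ * t * (t - 1) / (y - t) ^ 2)

def dihedralY (s : ℝ) : ℝ := s ^ 2 * (s + 2) / (s ^ 2 + s + 1)

def dihedralT (s : ℝ) : ℝ := s ^ 3 * (s + 2) / (2 * s + 1)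

def dihedralSlope (s : ℝ) : ℝ :=
  (2 * s + 1) ^ 2 * (s ^ 2 + s + 4) / (6 * s * (s + 1) * (s ^ 2 + s + 1) ^ 2)

theorem sq_add_add_one_ne_zero (x : ℝ) : x ^ 2 + x + 1 ≠ 0 := by
  nlinarith [sq_nonneg (x + 1 / 2)]

variable {s : ℝ}

theorem hasDerivAt_dihedralY (s : ℝ) :
    HasDerivAt dihedralY (s * (s + 1) * (s ^ 2 + s + 4) / (s ^ 2 + s + 1) ^ 2) s := by
  have hq := sq_add_add_one_ne_zero s
  refine (((hasDerivAt_pow 2 s).mul ((hasDerivAt_id s).add_const 2)).div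
    (((hasDerivAt_pow 2 s).add (hasDerivAt_id s)).add_const 1) hq).congr_deriv ?_
  simp only [id, Pi.add_apply, Pi.mul_apply]
  field_simp
  ring

theorem hasDerivAt_dihedralT (hl : 2 * s + 1 ≠ 0) :
    HasDerivAt dihedralT (6 * s ^ 2 * (s + 1) ^ 2 / (2 * s + 1) ^ 2) s := by
  refine (((hasDerivAt_pow 3 s).mul ((hasDerivAt_id s).add_const 2)).div
    (((hasDerivAt_id s).const_mul 2).add_const 1) hl).congr_deriv ?_
  simp only [id, Pi.mul_apply]
  field_simp
  ring

theorem hasDerivAt_dihedralSlope (h0 : s ≠ 0) (h1 : s + 1 ≠ 0) :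
    HasDerivAt dihedralSlope (-(2 * s + 1) * (2 * (s * (s + 1)) ^ 3 + 15 * (s * (s + 1)) ^ 2
      + 6 * (s * (s + 1)) + 2) / (3 * (s * (s + 1)) ^ 2 * (s ^ 2 + s + 1) ^ 3)) s := by
  have hq := sq_add_add_one_ne_zero s
  have hD : 6 * s * (s + 1) * (s ^ 2 + s + 1) ^ 2 ≠ 0 := by positivity
  refine ((((((hasDerivAt_id s).const_mul 2).add_const 1).pow 2).mul
    ((((hasDerivAt_pow 2 s).add (hasDerivAt_id s)).add_const 4))).div
    ((((hasDerivAt_id s).const_mul 6).mul ((hasDerivAt_id s).add_const 1)).mul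
      ((((hasDerivAt_pow 2 s).add (hasDerivAt_id s)).add_const 1).pow 2)) hD).congr_deriv ?_
  simp only [id, Pi.add_apply, Pi.mul_apply, Pi.pow_apply]
  rw [div_eq_div_iff (by positivity) (by positivity)]
  ring

theorem dihedralY_sub_one (s : ℝ) :
    dihedralY s - 1 = (s - 1) * (s + 1) ^ 2 / (s ^ 2 + s + 1) := by
  rw [dihedralY, div_sub_one (sq_add_add_one_ne_zero s)]
  ring

theorem dihedralT_sub_one (hl : 2 * s + 1 ≠ 0) :
    dihedralT s - 1 = (s - 1) * (s + 1) ^ 3 / (2 * s + 1) := by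
  rw [dihedralT, div_sub_one hl]
  ring

theorem dihedralY_sub_dihedralT (hl : 2 * s + 1 ≠ 0) :
    dihedralY s - dihedralT s
      = -(s ^ 2 * (s + 2) * (s - 1) * (s + 1) ^ 2) / ((s ^ 2 + s + 1) * (2 * s + 1)) := by
  rw [dihedralY, dihedralT, div_sub_div _ _ (sq_add_add_one_ne_zero s) hl]
  ring

theorem ne_zero_of_dihedralY_ne_dihedralT (hl : 2 * s + 1 ≠ 0)
    (h : dihedralY s ≠ dihedralT s) : s ≠ 0 ∧ s + 1 ≠ 0 ∧ s - 1 ≠ 0 ∧ s + 2 ≠ 0 := by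
  rw [← sub_ne_zero, dihedralY_sub_dihedralT hl] at h
  simp only [ne_eq, div_eq_zero_iff, neg_eq_zero, mul_eq_zero, pow_eq_zero_iff two_ne_zero,
    not_or] at h
  tauto

theorem dihedralSlope_eventuallyEq (h0 : s ≠ 0) (h1 : s + 1 ≠ 0) (hl : 2 * s + 1 ≠ 0) :
    (fun x => deriv dihedralY x / deriv dihedralT x) =ᶠ[𝓝 s] dihedralSlope := by
  have hnear : ∀ᶠ x in 𝓝 s, x * (x + 1) * (2 * x + 1) ≠ 0 :=
    (by fun_prop : Continuous fun x : ℝ => x * (x + 1) * (2 * x + 1)).continuousAt.eventually_ne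
      (by positivity)
  filter_upwards [hnear] with x hx
  obtain ⟨⟨hx0, hx1⟩, hxl⟩ := mul_ne_zero_iff.mp hx |>.imp_left mul_ne_zero_iff.mp
  rw [(hasDerivAt_dihedralY x).deriv, (hasDerivAt_dihedralT hxl).deriv, dihedralSlope]
  have hq := sq_add_add_one_ne_zero x
  field_simp

theorem dihedral_painleveVI (h0 : s ≠ 0) (h1 : s + 1 ≠ 0) (hm1 : s - 1 ≠ 0) (h2 : s + 2 ≠ 0)
    (hl : 2 * s + 1 ≠ 0) :
    -(2 * s + 1) * (2 * (s * (s + 1)) ^ 3 + 15 * (s * (s + 1)) ^ 2 + 6 * (s * (s + 1)) + 2)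
        / (3 * (s * (s + 1)) ^ 2 * (s ^ 2 + s + 1) ^ 3) / (6 * s ^ 2 * (s + 1) ^ 2 / (2 * s + 1) ^ 2)
      = painleveVIRhs (1 / 8) (-1 / 8) (1 / 8) (3 / 8) (dihedralT s) (dihedralY s)
          (dihedralSlope s) := by
  have hq := sq_add_add_one_ne_zero s
  rw [painleveVIRhs, dihedralY_sub_one, dihedralT_sub_one hl, dihedralY_sub_dihedralT hl,
    dihedralY, dihedralT, dihedralSlope]
  field_simp
  ring

end

/-- The 4-branch dihedral solution y(s) = s²(s+2)/(s²+s+1), t(s) = s³(s+2)/(2s+1) of Painlevé VI with α = 1/8, β = −1/8, γ = 1/8, δ = 3/8 (θ = (1/2,1/2,1/2,1/2)). -/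
theorem parametric_PVI_solution_12 :
    let y : ℝ → ℝ := fun s => s ^ 2 * (s + 2) / (s ^ 2 + s + 1)
    let t : ℝ → ℝ := fun s => s ^ 3 * (s + 2) / (2 * s + 1)
    let Y₁ : ℝ → ℝ := fun s => deriv y s / deriv t s
    let Y₂ : ℝ → ℝ := fun s => deriv Y₁ s / deriv t s
    ∀ s : ℝ, (s ^ 2 + s + 1) * (2 * s + 1) ≠ 0 → deriv t s ≠ 0 →
      t s ≠ 0 → t s ≠ 1 → y s ≠ 0 → y s ≠ 1 → y s ≠ t s →
      Y₂ s =
        (1 / 2) * (1 / y s + 1 / (y s - 1) + 1 / (y s - t s)) * (Y₁ s) ^ 2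
          - (1 / t s + 1 / (t s - 1) + 1 / (y s - t s)) * Y₁ s
          + y s * (y s - 1) * (y s - t s) / ((t s) ^ 2 * (t s - 1) ^ 2) *
            ((1 / 8) + (-1 / 8) * t s / (y s) ^ 2 + (1 / 8) * (t s - 1) / (y s - 1) ^ 2
              + (3 / 8) * t s * (t s - 1) / (y s - t s) ^ 2) := by
  intro y t Y₁ Y₂ s hden _ _ _ _ _ hyt
  have hl : 2 * s + 1 ≠ 0 := right_ne_zero_of_mul hden
  obtain ⟨h0, h1, hm1, h2⟩ := ne_zero_of_dihedralY_ne_dihedralT hl hyt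
  have hY₁ : Y₁ =ᶠ[𝓝 s] dihedralSlope := dihedralSlope_eventuallyEq h0 h1 hl
  show deriv Y₁ s / deriv dihedralT s
    = painleveVIRhs (1 / 8) (-1 / 8) (1 / 8) (3 / 8) (dihedralT s) (dihedralY s) (Y₁ s)
  rw [hY₁.deriv_eq, hY₁.eq_of_nhds, (hasDerivAt_dihedralSlope h0 h1).deriv,
    (hasDerivAt_dihedralT hl).deriv]
  exact dihedral_painleveVI h0 h1 hm1 h2 hl
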